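/- arXiv:1801.02467 — 2 statements merged into one kernel-verified Lean document; each statement's English description precedes it below -/
import Mathlib

section
/- Let Λ : D̃ → D̃ be a map on irreducible Dirichlet forms that is monotone (E ≤ E' implies Λ(E) ≤ Λ(E')) and homogeneous (Λ(cE) = cΛ(E) for c > 0). If E, E' ∈ D̃ and 0 < ρ < ρ', then one cannot have both Λ(E) ≤ ρE and Λ(E') ≥ ρ'E'. -/
/-!
Iterating `Λ` from `E'` gives forms bounded below by `ρ'ⁿ E'` (monotonicity and homogeneity
propagate `Λ(E') ≥ ρ' E'`) and, since `E' ≤ C E` by comparability, bounded above by `C ρⁿ E`.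
Evaluated at a nonconstant vector, this makes `(ρ'/ρ)ⁿ` bounded, which is absurd for `ρ < ρ'`.
Comparability itself comes from compactness: on unit vectors with a zero coordinate `E` is
bounded and `E'` is positive, and every nonconstant vector is a multiple of such a vector
up to an additive constant.
-/

/-- The Dirichlet form on `ℝ^V`, `V = Fin N`, with coefficients `c j₁ j₂`:
`E(u) = ∑_{j₁ < j₂} c j₁ j₂ (u j₁ - u j₂)²`. -/
noncomputable def dForm {N : ℕ} (c : Fin N → Fin N → ℝ) (u : Fin N → ℝ) : ℝ :=
  ∑ j₁ : Fin N, ∑ j₂ ∈ Finset.univ.filter (fun j₂ => j₁ < j₂), c j₁ j₂ * (u j₁ - u j₂) ^ 2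

/-- `E` is a Dirichlet form on `ℝ^(Fin N)` (member of `D`). -/
def IsDirichletForm {N : ℕ} (E : (Fin N → ℝ) → ℝ) : Prop :=
  ∃ c : Fin N → Fin N → ℝ, (∀ j₁ j₂, 0 ≤ c j₁ j₂) ∧ E = dForm c

/-- `E` is an irreducible Dirichlet form (member of `D̃`). -/
def IsIrreducibleForm {N : ℕ} (E : (Fin N → ℝ) → ℝ) : Prop :=
  IsDirichletForm E ∧ ∀ u, E u = 0 ↔ ∃ k : ℝ, ∀ j, u j = k

theorem not_forall_mul_pow_le_mul_pow {a b ρ ρ' : ℝ} (ha : 0 < a) (hρ : 0 < ρ) (hρρ' : ρ < ρ') :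
    ¬ ∀ n : ℕ, a * ρ' ^ n ≤ b * ρ ^ n := by
  intro h
  obtain ⟨n, hn⟩ := pow_unbounded_of_one_lt (b / a) ((one_lt_div hρ).mpr hρρ')
  rw [div_pow, div_lt_div_iff₀ ha (pow_pos hρ n)] at hn
  linarith [h n]

theorem IsCompact.exists_le_mul_of_pos {X : Type*} [TopologicalSpace X] {K : Set X}
    (hK : IsCompact K) {f g : X → ℝ} (hf : ContinuousOn f K) (hg : ContinuousOn g K)
    (hpos : ∀ x ∈ K, 0 < g x) : ∃ C, 0 < C ∧ ∀ x ∈ K, f x ≤ C * g x := by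
  obtain ⟨B, hB⟩ := hK.bddAbove_image (hf.div hg fun x hx => (hpos x hx).ne')
  refine ⟨max B 1, by positivity, fun x hx => ?_⟩
  have hquot : f x / g x ≤ max B 1 := (hB ⟨x, hx, rfl⟩).trans (le_max_left B 1)
  rwa [div_le_iff₀ (hpos x hx)] at hquot

structure IsMonotoneHomogeneousOn {M : Type*} [Preorder M] [SMul ℝ M] (Λ : M → M) (S : Set M) :
    Prop where
  mapsTo : Set.MapsTo Λ S S
  monotoneOn : MonotoneOn Λ S
  map_smul : ∀ x ∈ S, ∀ a : ℝ, 0 < a → Λ (a • x) = a • Λ x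

namespace IsMonotoneHomogeneousOn

variable {M : Type*} [AddCommGroup M] [PartialOrder M] [Module ℝ M] [PosSMulMono ℝ M]
  {Λ : M → M} {S : Set M}

theorem pow_smul_le_iterate (hΛ : IsMonotoneHomogeneousOn Λ S)
    (hS : ∀ x ∈ S, ∀ a : ℝ, 0 < a → a • x ∈ S) {x : M} (hx : x ∈ S) {ρ : ℝ} (hρ : 0 < ρ)
    (hsup : ρ • x ≤ Λ x) (n : ℕ) : ρ ^ n • x ≤ Λ^[n] x := by
  induction n with
  | zero => simp
  | succ n ih =>
    have hρn : 0 < ρ ^ n := pow_pos hρ n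
    calc ρ ^ (n + 1) • x = ρ ^ n • ρ • x := by rw [pow_succ, mul_smul]
      _ ≤ ρ ^ n • Λ x := smul_le_smul_of_nonneg_left hsup hρn.le
      _ = Λ (ρ ^ n • x) := (hΛ.map_smul x hx _ hρn).symm
      _ ≤ Λ (Λ^[n] x) := hΛ.monotoneOn (hS x hx _ hρn) (hΛ.mapsTo.iterate n hx) ih
      _ = Λ^[n + 1] x := (Function.iterate_succ_apply' Λ n x).symm

theorem iterate_le_mul_pow_smul (hΛ : IsMonotoneHomogeneousOn Λ S)
    (hS : ∀ x ∈ S, ∀ a : ℝ, 0 < a → a • x ∈ S) {x y : M} (hx : x ∈ S) (hy : y ∈ S)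
    {C ρ : ℝ} (hC : 0 < C) (hρ : 0 < ρ) (hyx : y ≤ C • x) (hsub : Λ x ≤ ρ • x) (n : ℕ) :
    Λ^[n] y ≤ (C * ρ ^ n) • x := by
  induction n with
  | zero => simpa using hyx
  | succ n ih =>
    have hCρn : 0 < C * ρ ^ n := by positivity
    calc Λ^[n + 1] y = Λ (Λ^[n] y) := Function.iterate_succ_apply' Λ n y
      _ ≤ Λ ((C * ρ ^ n) • x) :=
        hΛ.monotoneOn (hΛ.mapsTo.iterate n hy) (hS x hx _ hCρn) ih
      _ = (C * ρ ^ n) • Λ x := hΛ.map_smul x hx _ hCρn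
      _ ≤ (C * ρ ^ n) • ρ • x := smul_le_smul_of_nonneg_left hsub hCρn.le
      _ = (C * ρ ^ (n + 1)) • x := by rw [smul_smul, pow_succ, mul_assoc]

end IsMonotoneHomogeneousOn

theorem IsMonotoneHomogeneousOn.not_le_smul_and_smul_le {X : Type*}
    {Λ : (X → ℝ) → (X → ℝ)} {S : Set (X → ℝ)} (hΛ : IsMonotoneHomogeneousOn Λ S)
    (hS : ∀ E ∈ S, ∀ a : ℝ, 0 < a → a • E ∈ S) {E E' : X → ℝ} (hE : E ∈ S) (hE' : E' ∈ S)
    {C : ℝ} (hC : 0 < C) (hE'E : E' ≤ C • E) {u : X} (hu : 0 < E' u)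
    {ρ ρ' : ℝ} (hρ : 0 < ρ) (hρρ' : ρ < ρ') :
    ¬ (Λ E ≤ ρ • E ∧ ρ' • E' ≤ Λ E') := by
  rintro ⟨hsub, hsup⟩
  refine not_forall_mul_pow_le_mul_pow hu hρ hρρ' (b := C * E u) fun n => ?_
  have hlower := hΛ.pow_smul_le_iterate hS hE' (hρ.trans hρρ') hsup n u
  have hupper := hΛ.iterate_le_mul_pow_smul hS hE hE' hC hρ hE'E hsub n u
  simp only [Pi.smul_apply, smul_eq_mul] at hlower hupper
  linarith

section DirichletForm

variable {N : ℕ}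

theorem dForm_nonneg {c : Fin N → Fin N → ℝ} (hc : ∀ j₁ j₂, 0 ≤ c j₁ j₂) (u : Fin N → ℝ) :
    0 ≤ dForm c u :=
  Finset.sum_nonneg fun _ _ => Finset.sum_nonneg fun _ _ => mul_nonneg (hc _ _) (sq_nonneg _)

theorem dForm_smul (c : Fin N → Fin N → ℝ) (t : ℝ) (u : Fin N → ℝ) :
    dForm c (t • u) = t ^ 2 * dForm c u := by
  simp only [dForm, Finset.mul_sum, Pi.smul_apply, smul_eq_mul]
  congr! 2
  ring

theorem dForm_sub_const (c : Fin N → Fin N → ℝ) (u : Fin N → ℝ) (k : ℝ) :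
    dForm c (fun j => u j - k) = dForm c u := by
  simp only [dForm, sub_sub_sub_cancel_right]

theorem dForm_const (c : Fin N → Fin N → ℝ) (k : ℝ) : dForm c (fun _ => k) = 0 := by
  simp [dForm]

theorem smul_dForm (a : ℝ) (c : Fin N → Fin N → ℝ) : a • dForm c = dForm (a • c) := by
  ext u
  simp only [dForm, Pi.smul_apply, smul_eq_mul, Finset.mul_sum, mul_assoc]

theorem continuous_dForm (c : Fin N → Fin N → ℝ) : Continuous (dForm c) := by
  unfold dForm
  fun_prop

theorem exists_sub_const_eq_smul_of_not_const {u : Fin N → ℝ} (hu : ¬ ∃ k : ℝ, ∀ j, u j = k) :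
    ∃ (k t : ℝ) (w : Fin N → ℝ), w ∈ Metric.sphere 0 1 ∩ {v | ∃ j, v j = 0} ∧
      (fun j => u j - k) = t • w := by
  obtain ⟨j₀⟩ : Nonempty (Fin N) := not_isEmpty_iff.mp fun _ => hu ⟨0, fun j => isEmptyElim j⟩
  set v : Fin N → ℝ := fun j => u j - u j₀
  have hv : v ≠ 0 := fun h => hu ⟨u j₀, fun j => sub_eq_zero.mp (congrFun h j)⟩
  have hnorm : 0 < ‖v‖ := norm_pos_iff.mpr hv
  refine ⟨u j₀, ‖v‖, ‖v‖⁻¹ • v, ⟨?_, j₀, by simp [v]⟩, ?_⟩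
  · simp [norm_smul, hnorm.ne']
  · rw [smul_smul, mul_inv_cancel₀ hnorm.ne', one_smul]

end DirichletForm

namespace IsDirichletForm

variable {N : ℕ} {E : (Fin N → ℝ) → ℝ}

theorem nonneg (hE : IsDirichletForm E) (u : Fin N → ℝ) : 0 ≤ E u := by
  obtain ⟨c, hc, rfl⟩ := hE
  exact dForm_nonneg hc u

theorem smul (hE : IsDirichletForm E) {a : ℝ} (ha : 0 ≤ a) : IsDirichletForm (a • E) := by
  obtain ⟨c, hc, rfl⟩ := hE
  exact ⟨a • c, fun j₁ j₂ => mul_nonneg ha (hc j₁ j₂), smul_dForm a c⟩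

end IsDirichletForm

namespace IsIrreducibleForm

variable {N : ℕ} {E E' : (Fin N → ℝ) → ℝ}

theorem smul (hE : IsIrreducibleForm E) {a : ℝ} (ha : 0 < a) : IsIrreducibleForm (a • E) :=
  ⟨hE.1.smul ha.le, fun u => by simpa [ha.ne'] using hE.2 u⟩

theorem pos_of_not_const (hE : IsIrreducibleForm E) {u : Fin N → ℝ}
    (hu : ¬ ∃ k : ℝ, ∀ j, u j = k) : 0 < E u :=
  (hE.1.nonneg u).lt_of_ne fun h => hu ((hE.2 u).mp h.symm)

theorem exists_pos (hE : IsIrreducibleForm E) (hN : 2 ≤ N) : ∃ u, 0 < E u := by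
  refine ⟨fun j => j.val, hE.pos_of_not_const ?_⟩
  rintro ⟨k, hk⟩
  have h0 := hk ⟨0, by omega⟩
  have h1 := hk ⟨1, by omega⟩
  simp only [Nat.cast_zero, Nat.cast_one] at h0 h1
  linarith

theorem exists_le_smul (hE' : IsIrreducibleForm E') (hE : IsDirichletForm E) :
    ∃ C : ℝ, 0 < C ∧ E ≤ C • E' := by
  set K : Set (Fin N → ℝ) := Metric.sphere 0 1 ∩ {v | ∃ j, v j = 0}
  have hK : IsCompact K := (isCompact_sphere 0 1).inter_right <| by
    rw [Set.ofPred_exists]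
    exact isClosed_iUnion_of_finite fun j => isClosed_eq (continuous_apply j) continuous_const
  have hpos : ∀ v ∈ K, 0 < E' v := by
    rintro v ⟨hv, j₀, hj₀⟩
    refine hE'.pos_of_not_const fun ⟨k, hk⟩ => ?_
    have hv0 : v = 0 := funext fun j => by rw [hk j, ← hk j₀, hj₀]; rfl
    simp [hv0] at hv
  obtain ⟨c, -, rfl⟩ := hE
  obtain ⟨⟨c', -, rfl⟩, -⟩ := hE'
  obtain ⟨C, hC, hCK⟩ := hK.exists_le_mul_of_pos (continuous_dForm c).continuousOn
    (continuous_dForm c').continuousOn hpos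
  refine ⟨C, hC, fun u => ?_⟩
  by_cases hu : ∃ k : ℝ, ∀ j, u j = k
  · obtain ⟨k, hk⟩ := hu
    rw [show u = fun _ => k from funext hk, Pi.smul_apply, dForm_const, dForm_const, smul_zero]
  obtain ⟨k, t, w, hw, hkw⟩ := exists_sub_const_eq_smul_of_not_const hu
  calc dForm c u = t ^ 2 * dForm c w := by rw [← dForm_sub_const c u k, hkw, dForm_smul]
    _ ≤ t ^ 2 * (C * dForm c' w) := mul_le_mul_of_nonneg_left (hCK w hw) (sq_nonneg t)
    _ = C * (t ^ 2 * dForm c' w) := by ring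
    _ = (C • dForm c') u := by
      rw [Pi.smul_apply, smul_eq_mul, ← dForm_sub_const c' u k, hkw, dForm_smul]

end IsIrreducibleForm

/-- Lemma 4.1: if `Λ : D̃ → D̃` is monotone and positively
homogeneous, `E, E' ∈ D̃` and `0 < ρ < ρ'`, one cannot have both
`Λ(E) ≤ ρ E` and `Λ(E') ≥ ρ' E'`. -/
theorem no_two_eigenvalue_inequalities
    (N : ℕ) (hN : 2 ≤ N)
    (Λ : ((Fin N → ℝ) → ℝ) → ((Fin N → ℝ) → ℝ))
    (hmap : ∀ E, IsIrreducibleForm E → IsIrreducibleForm (Λ E))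
    (hmono : ∀ E E', IsIrreducibleForm E → IsIrreducibleForm E' →
      (∀ u, E u ≤ E' u) → ∀ u, Λ E u ≤ Λ E' u)
    (hhom : ∀ E, IsIrreducibleForm E → ∀ a : ℝ, 0 < a →
      Λ (fun u => a * E u) = fun u => a * Λ E u)
    (E E' : (Fin N → ℝ) → ℝ)
    (hE : IsIrreducibleForm E) (hE' : IsIrreducibleForm E')
    (ρ ρ' : ℝ) (hρ0 : 0 < ρ) (hρρ' : ρ < ρ') :
    ¬ ((∀ u, Λ E u ≤ ρ * E u) ∧ (∀ u, ρ' * E' u ≤ Λ E' u)) := by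
  have hΛ : IsMonotoneHomogeneousOn Λ {F | IsIrreducibleForm F} :=
    ⟨fun F hF => hmap F hF, fun F hF F' hF' h => hmono F F' hF hF' h, hhom⟩
  obtain ⟨C, hC, hE'E⟩ := hE.exists_le_smul hE'.1
  obtain ⟨u, hu⟩ := hE'.exists_pos hN
  exact hΛ.not_le_smul_and_smul_le (fun F hF a ha => hF.smul ha) hE hE' hC hE'E hu hρ0 hρρ'
end

section
/- Let Z be an affine subspace of ℝⁿ, K ⊆ Z compact convex with x̃ ∈ int(K), and let U ⊆ Z be an open set containing ∂K with x̃ ∉ closure(U). Let K̃ be the convex hull of K \ U. Then K̃ ⊆ int(K), ∂K̃ ⊆ closure(U), and x̃ ∈ int(K̃). -/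
/-!
Since `∂K ⊆ U`, the set `K \ U` lies in `int K`, which is convex (a homothety towards a point of
`K` maps `int K` onto an open subset of `K`); hence `K̃ ⊆ int K`. Moreover `int K \ closure U` is
an open subset of `K \ U ⊆ K̃`: it contains `x̃`, and every point of `closure K̃ ⊆ K` outside
`closure U` lies in it, so is not on `∂K̃`.
-/

open Set AffineMap

section Topology

variable {X : Type*} [TopologicalSpace X]

theorem diff_subset_interior_of_frontier_subset {s u : Set X} (h : frontier s ⊆ u) :
    s \ u ⊆ interior s := fun x hx => by
  by_contra hxi
  exact hx.2 (h ⟨subset_closure hx.1, hxi⟩)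

theorem interior_diff_closure_subset_interior {s t u : Set X} (h : s \ u ⊆ t) :
    interior s \ closure u ⊆ interior t :=
  interior_maximal (fun _ hx => h ⟨interior_subset hx.1, fun hu => hx.2 (subset_closure hu)⟩)
    (isOpen_interior.sdiff isClosed_closure)

theorem frontier_subset_closure_of_diff_subset {s t u : Set X} (hs : IsClosed s) (hts : t ⊆ s)
    (hsu : s \ u ⊆ interior s) (hst : s \ u ⊆ t) : frontier t ⊆ closure u := by
  intro x hx
  by_contra hxu
  have hxs : x ∈ s := hs.closure_subset_iff.2 hts hx.1
  exact hx.2 (interior_diff_closure_subset_interior hst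
    ⟨hsu ⟨hxs, fun hx => hxu (subset_closure hx)⟩, hxu⟩)

end Topology

namespace AffineSubspace

variable {E : Type*} [AddCommGroup E] [Module ℝ E] {Z : AffineSubspace ℝ E}

theorem coe_homothety [Nonempty Z] (q w : Z) (t : ℝ) :
    ((homothety q t w : Z) : E) = lineMap (q : E) (w : E) t := by
  simp [homothety_apply, lineMap_apply]

variable [TopologicalSpace E] [IsTopologicalAddGroup E] [ContinuousSMul ℝ E]

theorem homothety_mem_interior_of_convex [Nonempty Z] {K : Set Z}
    (hK : Convex ℝ (Subtype.val '' K : Set E)) {q p : Z} (hq : q ∈ K) (hp : p ∈ interior K) {t : ℝ} (ht : t ∈ Ioc 0 1) :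
    homothety q t p ∈ interior K := by
  refine interior_maximal ?_ ((homothety_isOpenMap q t ht.1.ne') _ isOpen_interior)
    (mem_image_of_mem _ hp)
  rintro _ ⟨w, hw, rfl⟩
  rw [← Subtype.val_injective.mem_set_image, coe_homothety]
  exact hK.lineMap_mem (mem_image_of_mem _ hq) (mem_image_of_mem _ (interior_subset hw))
    (Ioc_subset_Icc_self ht)

theorem convex_image_interior {K : Set Z} (hK : Convex ℝ (Subtype.val '' K : Set E)) :
    Convex ℝ (Subtype.val '' interior K : Set E) := by
  rw [convex_iff_openSegment_subset]
  rintro _ ⟨q, hq, rfl⟩ _ ⟨p, hp, rfl⟩ _ hz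
  have : Nonempty Z := ⟨q⟩
  obtain ⟨t, ht, rfl⟩ := (openSegment_eq_image_lineMap ℝ (q : E) p) ▸ hz
  rw [← coe_homothety]
  exact mem_image_of_mem _ <|
    homothety_mem_interior_of_convex hK (interior_subset hq) hp (Ioo_subset_Ioc_self ht)

end AffineSubspace

theorem convex_hull_of_complement_of_boundary_nbhd_general
    (n : ℕ) (Z : AffineSubspace ℝ (Fin n → ℝ))
    (K : Set Z) (hKc : IsCompact K) (hKconv : Convex ℝ (Subtype.val '' K))
    (xt : Z) (hxt : xt ∈ interior K)
    (U : Set Z) (hUK : frontier K ⊆ U) (hxtU : xt ∉ closure U)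
    (Kt : Set Z)
    (hKt : Kt = Subtype.val ⁻¹' (convexHull ℝ (Subtype.val '' (K \ U)))) :
    Kt ⊆ interior K ∧ frontier Kt ⊆ closure U ∧ xt ∈ interior Kt := by
  have hKU_int : K \ U ⊆ interior K := diff_subset_interior_of_frontier_subset hUK
  have hKU_Kt : K \ U ⊆ Kt := fun x hx => hKt ▸ subset_convexHull ℝ _ (mem_image_of_mem _ hx)
  have hKt_int : Kt ⊆ interior K := by
    rw [hKt, ← Subtype.val_injective.preimage_image (interior K)]
    exact preimage_mono <|
      convexHull_min (image_mono hKU_int) (AffineSubspace.convex_image_interior hKconv)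
  refine ⟨hKt_int, ?_, interior_diff_closure_subset_interior hKU_Kt ⟨hxt, hxtU⟩⟩
  exact frontier_subset_closure_of_diff_subset hKc.isClosed (hKt_int.trans interior_subset)
    hKU_int hKU_Kt

/-- let `K` be compact convex in an affine subspace `Z` of `ℝⁿ`
with `x̃ ∈ int K`, and `U ⊆ Z` open with `∂K ⊆ U` and `x̃ ∉ closure U`.
Let `K̃` be the convex hull of `K \ U`. Then `K̃ ⊆ int K`, `∂K̃ ⊆ closure U`,
and `x̃ ∈ int K̃`. -/
theorem convex_hull_of_complement_of_boundary_nbhd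
    (n : ℕ) (Z : AffineSubspace ℝ (Fin n → ℝ))
    (K : Set Z) (hKc : IsCompact K) (hKconv : Convex ℝ (Subtype.val '' K))
    (xt : Z) (hxt : xt ∈ interior K)
    (U : Set Z) (hU : IsOpen U) (hUK : frontier K ⊆ U) (hxtU : xt ∉ closure U)
    (Kt : Set Z)
    (hKt : Kt = Subtype.val ⁻¹' (convexHull ℝ (Subtype.val '' (K \ U)))) :
    Kt ⊆ interior K ∧ frontier Kt ⊆ closure U ∧ xt ∈ interior Kt :=
  convex_hull_of_complement_of_boundary_nbhd_general n Z K hKc hKconv xt hxt U hUK hxtU Kt hKt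
end
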